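/- Substitution of an inert term cannot create βf-redexes: for terms t, u, an inert term i, and a variable x, (1) if t[x:=i] →βλ u then there is s with t →βλ s and s[x:=i] = u; (2) if t[x:=i] →βi u then there is s with t →βi s and s[x:=i] = u. -/
import Mathlib


/-- λ-terms in de Bruijn notation: variables, abstractions, applications. -/
inductive Tm : Type
  | var : Nat → Tm
  | lam : Tm → Tm
  | app : Tm → Tm → Tm

namespace Tm

/-- Shift (by one) the free de Bruijn indices `≥ k`. -/
def shift (k : Nat) : Tm → Tm
  | var n => if k ≤ n then var (n+1) else var n
  | lam t => lam (shift (k+1) t)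
  | app t u => app (shift k t) (shift k u)

/-- Capture-avoiding substitution of `u` for the free variable `k` in a term. -/
def subst : Tm → Nat → Tm → Tm
  | var n, k, u => if n = k then u else if k < n then var (n-1) else var n
  | lam t, k, u => lam (subst t (k+1) (shift 0 u))
  | app t s, k, u => app (subst t k u) (subst s k u)

/-- Values: variables and abstractions. -/
inductive IsValue : Tm → Prop
  | var : IsValue (var n)
  | lam : IsValue (lam t)

end Tm
open Tm

mutual
/-- Inert terms: `i ::= x | i f`. -/
inductive Inert : Tm → Prop
  | var : Inert (.var n)
  | app : Inert i → Fireball f → Inert (.app i f)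
/-- Fireballs: `f ::= λx.t | i`. -/
inductive Fireball : Tm → Prop
  | lam : Fireball (.lam t)
  | inert : Inert i → Fireball i
end

/-- Abstraction steps: root rule `(λx.t)(λy.u) ↦ t[x:=λy.u]`, weak closure. -/
inductive StepBL : Tm → Tm → Prop
  | beta : StepBL (.app (.lam t) (.lam u)) (subst t 0 (.lam u))
  | appL : StepBL t t' → StepBL (.app t u) (.app t' u)
  | appR : StepBL u u' → StepBL (.app t u) (.app t u')

/-- Inert steps: root rule `(λx.t)i ↦ t[x:=i]` with `i` inert, weak closure. -/
inductive StepBI : Tm → Tm → Prop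
  | beta : Inert i → StepBI (.app (.lam t) i) (subst t 0 i)
  | appL : StepBI t t' → StepBI (.app t u) (.app t' u)
  | appR : StepBI u u' → StepBI (.app t u) (.app t u')

/-- The fireball reduction `→βf = →βλ ∪ →βi`. -/
def StepBF (t u : Tm) : Prop := StepBL t u ∨ StepBI t u


theorem shift_shift (t : Tm) : ∀ j k, j ≤ k →
    shift j (shift k t) = shift (k+1) (shift j t) := by
  induction t with
  | var n =>
    intro j k h
    simp only [shift]
    by_cases h1 : k ≤ n
    · simp [shift, h1, show j ≤ n by omega, show j ≤ n + 1 by omega,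
        show k + 1 ≤ n + 1 by omega]
    · by_cases h2 : j ≤ n
      · simp [shift, h1, h2, show ¬ k + 1 ≤ n + 1 by omega]
      · simp [shift, h1, h2, show ¬ k + 1 ≤ n by omega]
  | lam t ih =>
    intro j k h
    simp only [shift]
    rw [ih (j+1) (k+1) (by omega)]
  | app a b iha ihb =>
    intro j k h
    simp only [shift, iha j k h, ihb j k h]

theorem subst_shift_cancel (t : Tm) : ∀ k u, subst (shift k t) k u = t := by
  induction t with
  | var n =>
    intro k u
    simp only [shift]
    by_cases h1 : k ≤ n
    · simp [subst, h1, show ¬ n + 1 = k by omega, show k < n + 1 by omega]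
    · simp [subst, h1, show ¬ n = k by omega, show ¬ k < n by omega]
  | lam t ih => intro k u; simp only [shift, subst, ih]
  | app a b iha ihb => intro k u; simp only [shift, subst, iha, ihb]

theorem shift_subst (t : Tm) : ∀ j m w, j ≤ m →
    shift j (subst t m w) = subst (shift j t) (m+1) (shift j w) := by
  induction t with
  | var n =>
    intro j m w h
    rcases Nat.lt_trichotomy n m with hn | hn | hn
    · by_cases h2 : j ≤ n
      · simp [subst, shift, show ¬ n = m by omega, show ¬ m < n by omega, h2,
          show ¬ n + 1 = m + 1 by omega, show ¬ m + 1 < n + 1 by omega]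
      · simp [subst, shift, show ¬ n = m by omega, show ¬ m < n by omega, h2,
          show ¬ n = m + 1 by omega, show ¬ m + 1 < n by omega]
    · subst hn
      simp [subst, shift, show j ≤ n by omega]
    · simp [subst, shift, show ¬ n = m by omega, hn, show j ≤ n - 1 by omega,
        show j ≤ n by omega, show ¬ n + 1 = m + 1 by omega,
        show m + 1 < n + 1 by omega]
      congr 1
      omega
  | lam t ih =>
    intro j m w h
    simp only [subst, shift]
    rw [ih (j+1) (m+1) _ (by omega), shift_shift w 0 j (Nat.zero_le j)]
  | app a b iha ihb =>
    intro j m w h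
    simp only [subst, shift, iha j m w h, ihb j m w h]

theorem subst_subst (t : Tm) : ∀ n m v w, n ≤ m →
    subst (subst t n v) m w = subst (subst t (m+1) (shift n w)) n (subst v m w) := by
  induction t with
  | var p =>
    intro n m v w h
    rcases Nat.lt_trichotomy p n with hp | hp | hp
    · simp [subst, show ¬ p = n by omega, show ¬ n < p by omega,
        show ¬ p = m + 1 by omega, show ¬ m + 1 < p by omega,
        show ¬ p = m by omega, show ¬ m < p by omega]
    · subst hp
      simp [subst, show ¬ p = m + 1 by omega, show ¬ m + 1 < p by omega]
    · have h1 : ¬ p = n := by omega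
      rcases Nat.lt_trichotomy p (m+1) with hq | hq | hq
      · simp [subst, h1, hp, show ¬ p = m+1 by omega, show ¬ m+1 < p by omega,
          show ¬ p - 1 = m by omega, show ¬ m < p - 1 by omega]
      · subst hq
        simp [subst, show ¬ m + 1 = n by omega, show n < m + 1 from hp,
          show m + 1 - 1 = m by omega, subst_shift_cancel]
      · simp [subst, h1, hp, show ¬ p = m+1 by omega, hq,
          show ¬ p - 1 = m by omega, show m < p - 1 by omega,
          show ¬ p - 1 = n by omega, show n < p - 1 by omega]
  | lam t ih =>
    intro n m v w h
    simp only [subst]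
    rw [ih (n+1) (m+1) _ _ (by omega), shift_shift w 0 n (Nat.zero_le n),
      shift_subst v 0 m w (Nat.zero_le m)]
  | app a b iha ihb =>
    intro n m v w h
    simp only [subst, iha _ _ _ _ h, ihb _ _ _ _ h]

theorem step_not_fireball :
    (∀ t u, StepBL t u → ¬ Fireball t) ∧ (∀ t u, StepBI t u → ¬ Fireball t) := by
  constructor
  · intro t u h
    induction h with
    | beta => intro hf; cases hf with | inert hi => cases hi with | app hi _ => cases hi
    | appL _ ih =>
      intro hf; cases hf with | inert hi => cases hi with
        | app hi hf => exact ih (Fireball.inert hi)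
    | appR _ ih =>
      intro hf; cases hf with | inert hi => cases hi with
        | app _ hf => exact ih hf
  · intro t u h
    induction h with
    | beta _ => intro hf; cases hf with | inert hi => cases hi with | app hi _ => cases hi
    | appL _ ih =>
      intro hf; cases hf with | inert hi => cases hi with
        | app hi hf => exact ih (Fireball.inert hi)
    | appR _ ih =>
      intro hf; cases hf with | inert hi => cases hi with
        | app _ hf => exact ih hf

theorem inert_of_subst (i : Tm) (hi : Inert i) (t : Tm) : ∀ x,
    (Inert (subst t x i) → Inert t) ∧ (Fireball (subst t x i) → Fireball t) := by
  induction t with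
  | var n =>
    intro x
    exact ⟨fun _ => Inert.var, fun _ => Fireball.inert Inert.var⟩
  | lam t ih =>
    intro x
    constructor
    · intro h; simp only [subst] at h; cases h
    · intro _; exact Fireball.lam
  | app a b iha ihb =>
    intro x
    constructor
    · intro h
      simp only [subst] at h
      cases h with
      | app ha hb => exact Inert.app ((iha x).1 ha) ((ihb x).2 hb)
    · intro h
      simp only [subst] at h
      cases h with
      | inert hi' =>
        cases hi' with
        | app ha hb =>
          exact Fireball.inert (Inert.app ((iha x).1 ha) ((ihb x).2 hb))

theorem subst_eq_lam (i : Tm) (hi : Inert i) (t a : Tm) (x : Nat)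
    (h : subst t x i = .lam a) :
    ∃ t', t = .lam t' ∧ subst t' (x+1) (shift 0 i) = a := by
  cases t with
  | var n =>
    simp only [subst] at h
    split_ifs at h
    · subst h; cases hi
  | lam t' =>
    simp only [subst] at h
    exact ⟨t', rfl, by injection h⟩
  | app a b => simp [subst] at h

/-- substitution of an inert term cannot create βf-redexes. -/
theorem inert_substitution_anti_reduction (t u i : Tm) (x : Nat) (hi : Inert i) :
    (StepBL (subst t x i) u → ∃ s, StepBL t s ∧ subst s x i = u) ∧
    (StepBI (subst t x i) u → ∃ s, StepBI t s ∧ subst s x i = u) := by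
  induction t generalizing u with
  | var n =>
    constructor <;> intro h <;> simp only [subst] at h <;> split_ifs at h
    · exact absurd (Fireball.inert hi) (step_not_fireball.1 _ _ h)
    · cases h
    · cases h
    · exact absurd (Fireball.inert hi) (step_not_fireball.2 _ _ h)
    · cases h
    · cases h
  | lam t ih =>
    constructor <;> intro h <;> simp only [subst] at h <;> cases h
  | app a b iha ihb =>
    constructor <;> intro h <;> simp only [subst] at h
    · generalize hA : subst a x i = A at h
      generalize hB : subst b x i = B at h
      cases h with
      | beta =>
        rename_i t' u'
        obtain ⟨a', rfl, ha'⟩ := subst_eq_lam i hi a t' x hA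
        obtain ⟨b', rfl, hb'⟩ := subst_eq_lam i hi b u' x hB
        refine ⟨subst a' 0 (.lam b'), StepBL.beta, ?_⟩
        rw [subst_subst a' 0 x _ _ (Nat.zero_le x), ha']
        simp only [subst, hb']
      | appL h =>
        subst hA hB
        obtain ⟨s, hs, rfl⟩ := (iha _).1 h
        exact ⟨.app s b, StepBL.appL hs, rfl⟩
      | appR h =>
        subst hA hB
        obtain ⟨s, hs, rfl⟩ := (ihb _).1 h
        exact ⟨.app a s, StepBL.appR hs, rfl⟩
    · generalize hA : subst a x i = A at h
      generalize hB : subst b x i = B at h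
      cases h with
      | beta hi' =>
        rename_i t'
        obtain ⟨a', rfl, ha'⟩ := subst_eq_lam i hi a t' x hA
        subst hB
        have hb : Inert b := (inert_of_subst i hi b x).1 hi'
        refine ⟨subst a' 0 b, StepBI.beta hb, ?_⟩
        rw [subst_subst a' 0 x _ _ (Nat.zero_le x), ha']
      | appL h =>
        subst hA hB
        obtain ⟨s, hs, rfl⟩ := (iha _).2 h
        exact ⟨.app s b, StepBI.appL hs, rfl⟩
      | appR h =>
        subst hA hB
        obtain ⟨s, hs, rfl⟩ := (ihb _).2 h
        exact ⟨.app a s, StepBI.appR hs, rfl⟩
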